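/- arXiv:0712.2525 — 3 statements merged into one kernel-verified Lean document; each statement's English description precedes it below -/
import Mathlib

section
/- Let L(x,y) ⊆ Σ* for x, y in a finite set S denote the homs of a category enriched in the quantale of languages P(Σ*) (composition is concatenation of languages, identities contain the empty word ε). Fix two objects x, y ∈ S and form the quotient enriched category X' identifying x and y. Then for objects z, w, the hom of the quotient is X'(z,w) = X(z,w) ∪ (X(z,x) ∪ X(z,y)) · (X(x,x) ∪ X(x,y) ∪ X(y,x) ∪ X(y,y))* · (X(x,w) ∪ X(y,w)), where · is language concatenation and * is Kleene star. -/
open Computability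

/-! Every word of the quotient either stays in `X`, or is a path that enters the merged object
(through `x` or `y`), loops there, and leaves it. Since composing an exit with an entry gives a
loop, these paths are closed under composition; conversely, in any category identifying `x` and
`y`, all such entries, loops and exits land in `Y z x`, `Y x x` and `Y x w`. -/

/- Composition is written in path order: `X z w * X w v ≤ X z v`. -/

namespace IdemSemiring

variable {α : Type*} [IdemSemiring α]

theorem mul_sup (a b c : α) : a * (b ⊔ c) = a * b ⊔ a * c := by
  simp only [← add_eq_sup, mul_add]

theorem sup_mul (a b c : α) : (a ⊔ b) * c = a * c ⊔ b * c := by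
  simp only [← add_eq_sup, add_mul]

end IdemSemiring

theorem kstar_mul_mul_kstar_le_kstar {α : Type*} [KleeneAlgebra α] {a b : α} (h : b ≤ a) :
    a∗ * b * a∗ ≤ a∗ :=
  calc a∗ * b * a∗ ≤ a∗ * a * a∗ := by gcongr
    _ ≤ a∗ * a∗ := by gcongr; exact kstar_mul_le_kstar
    _ = a∗ := kstar_mul_kstar a

section Identity

variable {α S : Type*} [Monoid α] [Preorder α] {Y : S → S → α}

theorem hom_le_hom_of_one_le_right [MulLeftMono α] (Ycomp : ∀ z w v, Y z w * Y w v ≤ Y z v)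
    {a b : S} (h : 1 ≤ Y a b) (c : S) : Y c a ≤ Y c b :=
  calc Y c a = Y c a * 1 := (mul_one _).symm
    _ ≤ Y c a * Y a b := by gcongr
    _ ≤ Y c b := Ycomp c a b

theorem hom_le_hom_of_one_le_left [MulRightMono α] (Ycomp : ∀ z w v, Y z w * Y w v ≤ Y z v)
    {a b : S} (h : 1 ≤ Y a b) (c : S) : Y b c ≤ Y a c :=
  calc Y b c = 1 * Y b c := (one_mul _).symm
    _ ≤ Y a b * Y b c := by gcongr
    _ ≤ Y a c := Ycomp a b c

end Identity

section Merge

variable {α S : Type*} [KleeneAlgebra α]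

def mergeIn (X : S → S → α) (x y : S) (z : S) : α := X z x ⊔ X z y

def mergeOut (X : S → S → α) (x y : S) (w : S) : α := X x w ⊔ X y w

def mergeLoop (X : S → S → α) (x y : S) : α := X x x ⊔ X x y ⊔ X y x ⊔ X y y

def mergeHom (X : S → S → α) (x y : S) (z w : S) : α :=
  X z w ⊔ mergeIn X x y z * (mergeLoop X x y)∗ * mergeOut X x y w

variable {X : S → S → α} (x y : S)

theorem le_mergeHom (z w : S) : X z w ≤ mergeHom X x y z w := le_sup_left

theorem one_le_mergeHom (Xid : ∀ z, 1 ≤ X z z) (z : S) : 1 ≤ mergeHom X x y z z :=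
  (Xid z).trans (le_mergeHom x y z z)

theorem one_le_mergeHom_of_mem {a b : S} (ha : a = x ∨ a = y) (hb : b = x ∨ b = y)
    (Xid : ∀ z, 1 ≤ X z z) : 1 ≤ mergeHom X x y a b := by
  refine le_sup_of_le_right ?_
  calc (1 : α) = 1 * 1 * 1 := by simp only [mul_one]
    _ ≤ mergeIn X x y a * (mergeLoop X x y)∗ * mergeOut X x y b := by
      gcongr
      · rcases ha with rfl | rfl
        exacts [le_sup_of_le_left (Xid a), le_sup_of_le_right (Xid a)]
      · exact one_le_kstar
      · rcases hb with rfl | rfl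
        exacts [le_sup_of_le_left (Xid b), le_sup_of_le_right (Xid b)]

variable (Xcomp : ∀ z w v, X z w * X w v ≤ X z v)
include Xcomp

theorem mul_mergeIn_le (z w : S) : X z w * mergeIn X x y w ≤ mergeIn X x y z := by
  rw [mergeIn, IdemSemiring.mul_sup]
  exact sup_le_sup (Xcomp z w x) (Xcomp z w y)

theorem mergeOut_mul_le (w v : S) : mergeOut X x y w * X w v ≤ mergeOut X x y v := by
  rw [mergeOut, IdemSemiring.sup_mul]
  exact sup_le_sup (Xcomp x w v) (Xcomp y w v)

theorem mergeOut_mul_mergeIn_le (w : S) :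
    mergeOut X x y w * mergeIn X x y w ≤ mergeLoop X x y := by
  rw [mergeOut, mergeIn, IdemSemiring.sup_mul, IdemSemiring.mul_sup, IdemSemiring.mul_sup,
    ← sup_assoc]
  exact sup_le_sup (sup_le_sup (sup_le_sup (Xcomp x w x) (Xcomp x w y)) (Xcomp y w x))
    (Xcomp y w y)

theorem mergeHom_mul_le (z w v : S) :
    mergeHom X x y z w * mergeHom X x y w v ≤ mergeHom X x y z v := by
  set I := mergeIn X x y
  set O := mergeOut X x y
  set H := mergeLoop X x y
  rw [mergeHom, mergeHom, IdemSemiring.sup_mul, IdemSemiring.mul_sup (X z w),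
    IdemSemiring.mul_sup (I z * H∗ * O w)]
  refine sup_le (sup_le (le_sup_of_le_left (Xcomp z w v)) ?_) (sup_le ?_ ?_) <;>
    refine le_sup_of_le_right ?_
  · calc X z w * (I w * H∗ * O v) = X z w * I w * H∗ * O v := by simp only [mul_assoc]
      _ ≤ I z * H∗ * O v := by gcongr; exact mul_mergeIn_le x y Xcomp z w
  · calc I z * H∗ * O w * X w v = I z * H∗ * (O w * X w v) := mul_assoc _ _ _
      _ ≤ I z * H∗ * O v := by gcongr; exact mergeOut_mul_le x y Xcomp w v
  · calc I z * H∗ * O w * (I w * H∗ * O v) = I z * (H∗ * (O w * I w) * H∗) * O v := by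
          simp only [mul_assoc]
      _ ≤ I z * H∗ * O v := by
          gcongr
          exact kstar_mul_mul_kstar_le_kstar (mergeOut_mul_mergeIn_le x y Xcomp w)

end Merge

section Minimality

variable {α S : Type*} [KleeneAlgebra α] {X Y : S → S → α} {x y : S}
  (Ycomp : ∀ z w v, Y z w * Y w v ≤ Y z v) (YX : ∀ z w, X z w ≤ Y z w)
include Ycomp YX

theorem mergeIn_le (Yyx : 1 ≤ Y y x) (z : S) : mergeIn X x y z ≤ Y z x :=
  sup_le (YX z x) ((YX z y).trans (hom_le_hom_of_one_le_right Ycomp Yyx z))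

theorem mergeOut_le (Yxy : 1 ≤ Y x y) (w : S) : mergeOut X x y w ≤ Y x w :=
  sup_le (YX x w) ((YX y w).trans (hom_le_hom_of_one_le_left Ycomp Yxy w))

theorem mergeLoop_le (Yxy : 1 ≤ Y x y) (Yyx : 1 ≤ Y y x) : mergeLoop X x y ≤ Y x x :=
  have hyx : Y y x ≤ Y x x := hom_le_hom_of_one_le_left Ycomp Yxy x
  sup_le (sup_le (mergeIn_le Ycomp YX Yyx x) ((YX y x).trans hyx))
    ((YX y y).trans ((hom_le_hom_of_one_le_right Ycomp Yyx y).trans hyx))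

theorem mergeHom_le (Yid : ∀ z, 1 ≤ Y z z) (Yxy : 1 ≤ Y x y) (Yyx : 1 ≤ Y y x) (z w : S) :
    mergeHom X x y z w ≤ Y z w := by
  have loop : (mergeLoop X x y)∗ ≤ Y x x := kstar_le_of_mul_le_left (Yid x) <|
    (mul_le_mul_right (mergeLoop_le Ycomp YX Yxy Yyx) _).trans (Ycomp x x x)
  refine sup_le (YX z w) ?_
  calc mergeIn X x y z * (mergeLoop X x y)∗ * mergeOut X x y w ≤ Y z x * Y x x * Y x w := by
        gcongr
        exacts [mergeIn_le Ycomp YX Yyx z, mergeOut_le Ycomp YX Yxy w]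
    _ ≤ Y z x * Y x w := by gcongr; exact Ycomp z x x
    _ ≤ Y z w := Ycomp z x w

end Minimality

/-- The quotient of a `P(Σ*)`-enriched category identifying two objects `x` and `y`:
the family `X'(z,w) = X(z,w) ∪ (X(z,x) ∪ X(z,y)) · H* · (X(x,w) ∪ X(y,w))`, where
`H = X(x,x) ∪ X(x,y) ∪ X(y,x) ∪ X(y,y)`, is itself an enriched category in which `x`
and `y` are identified (it contains the identities of the merged object), it contains
`X`, and it is the least such family: any enriched category `Y` containing `X` in which
`x` and `y` are identified contains `X'`. Hence `X'` is the quotient's hom family. -/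
theorem kleene_quotient_formula {σ : Type*} {S : Type*} (X : S → S → Language σ)
    (Xid : ∀ z, 1 ≤ X z z) (Xcomp : ∀ z w v, X z w * X w v ≤ X z v) (x y : S) :
    let H : Language σ := X x x ⊔ X x y ⊔ X y x ⊔ X y y
    let X' : S → S → Language σ := fun z w =>
      X z w ⊔ (X z x ⊔ X z y) * H∗ * (X x w ⊔ X y w)
    -- `X'` is an enriched category …
    (∀ z, 1 ≤ X' z z) ∧ (∀ z w v, X' z w * X' w v ≤ X' z v) ∧
    -- … in which `x` and `y` are identified …
    (1 ≤ X' x y ∧ 1 ≤ X' y x) ∧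
    -- … containing `X` …
    (∀ z w, X z w ≤ X' z w) ∧
    -- … and it is the least such, hence the hom family of the quotient.
    (∀ Y : S → S → Language σ, (∀ z, 1 ≤ Y z z) → (∀ z w v, Y z w * Y w v ≤ Y z v) →
      (∀ z w, X z w ≤ Y z w) → 1 ≤ Y x y → 1 ≤ Y y x → ∀ z w, X' z w ≤ Y z w) :=
  ⟨one_le_mergeHom x y Xid, mergeHom_mul_le x y Xcomp,
    ⟨one_le_mergeHom_of_mem x y (.inl rfl) (.inr rfl) Xid,
      one_le_mergeHom_of_mem x y (.inr rfl) (.inl rfl) Xid⟩,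
    le_mergeHom x y,
    fun _ Yid Ycomp YX Yxy Yyx => mergeHom_le Ycomp YX Yid Yxy Yyx⟩
end

section
/- Let f : A + C → B + C be a morphism in the category of sets (or any extensive category with finite colimits). Form the pushout Q of (1_A + ∇_C) : A + C + C → A + C along (f + 1_C) : A + C + C → B + C + C, followed by (1_B + ∇_C) : B + C + C → B + C; this is the composite in Cospan of A ↔ A+C+C ↔ B+C+C ↔ B built from η_C, f⃗ + C, ε_C. In Set, the resulting colimit object is the set of orbits of A + B + C under the identifications generated by x ∼ f(x) when traversing C (i.e., the quotient of A+B+C by the equivalence relation generated by c ∼ f(inr c) for c ∈ C and a ∼ f(inl a) identified across the two copies of C). -/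
open CategoryTheory Limits

/-!
Pasting the two pushout squares exhibits the composite as the single pushout of
`1_A + ∇_C` and `(f + 1_C) ≫ (1_B + ∇_C) = [f, inr]`, which in `Type` is the quotient of
`(A + C) + (B + C)` by `u ~ f u` and `inr c ~ inr c` across the two summands. The second family
of relations merely glues the two copies of `C`, so this quotient is `A + B + C` modulo `z ~ f z`.
-/

def Quot.equivOfRespects {α β : Sort*} {r : α → α → Prop} {s : β → β → Prop}
    (φ : α → β) (ψ : β → α)
    (hφ : ∀ a a', r a a' → Quot.mk s (φ a) = Quot.mk s (φ a'))
    (hψ : ∀ b b', s b b' → Quot.mk r (ψ b) = Quot.mk r (ψ b'))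
    (hψφ : ∀ a, Quot.mk r (ψ (φ a)) = Quot.mk r a)
    (hφψ : ∀ b, Quot.mk s (φ (ψ b)) = Quot.mk s b) : Quot r ≃ Quot s where
  toFun := Quot.lift (fun a => Quot.mk s (φ a)) hφ
  invFun := Quot.lift (fun b => Quot.mk r (ψ b)) hψ
  left_inv := by rintro ⟨a⟩; exact hψφ a
  right_inv := by rintro ⟨b⟩; exact hφψ b

section Orbits

variable {A B C : Type} (f : A ⊕ C → B ⊕ C)

def orbitRel : (A ⊕ B) ⊕ C → (A ⊕ B) ⊕ C → Prop :=
  fun z w => ∃ u : A ⊕ C, z = Sum.map Sum.inl id u ∧ w = Sum.map Sum.inr id (f u)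

abbrev idSumCodiag (X C : Type) : (X ⊕ C) ⊕ C ⟶ (X ⊕ C : Type) :=
  TypeCat.ofHom (Sum.elim id Sum.inr)

abbrev traceLeg : (A ⊕ C) ⊕ C ⟶ (B ⊕ C : Type) := TypeCat.ofHom (Sum.map f id) ≫ idSumCodiag B C

def pushoutTraceEquivOrbits :
    Types.Pushout (idSumCodiag A C) (traceLeg f) ≃ Quot (orbitRel f) := by
  let ψ : (A ⊕ B) ⊕ C → (A ⊕ C) ⊕ (B ⊕ C) :=
    Sum.elim (Sum.map Sum.inl Sum.inl) (Sum.inr ∘ Sum.inr)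
  have ψ_inr : ∀ v, ψ (Sum.map Sum.inr id v) = Sum.inr v := by rintro (b | c) <;> rfl
  let mk := Quot.mk (Types.Pushout.Rel (idSumCodiag A C) (traceLeg f))
  have glue_f : ∀ u, mk (Sum.inl u) = mk (Sum.inr (f u)) :=
    fun u => Quot.sound (.inl_inr (Sum.inl u))
  have glue_C : ∀ c, mk (Sum.inl (Sum.inr c)) = mk (Sum.inr (Sum.inr c)) :=
    fun c => Quot.sound (.inl_inr (Sum.inr c))
  refine Quot.equivOfRespects (Sum.elim (Sum.map Sum.inl id) (Sum.map Sum.inr id)) ψ ?_ ?_ ?_ ?_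
  · rintro _ _ ⟨(u | c)⟩
    · exact Quot.sound ⟨u, rfl, rfl⟩
    · rfl
  · rintro _ _ ⟨(a | c), rfl, rfl⟩ <;> rw [ψ_inr]
    · exact glue_f (Sum.inl a)
    · exact (glue_C c).symm.trans (glue_f (Sum.inr c))
  · rintro ((a | c) | v)
    · rfl
    · exact (glue_C c).symm
    · exact congrArg _ (ψ_inr v)
  · rintro ((a | b) | c) <;> rfl

end Orbits

/-- For sets `A, B, C` and `f : A + C → B + C`, the cospan composite
`A ↔ A+C+C ↔ B+C+C ↔ B` built from `η_C`, `f⃗ + C`, `ε_C` (computed by successive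
pushouts as in the monoidal colimit construction) has as its apex the set of orbits:
the quotient of `A + B + C` by the equivalence relation generated by `z ~ f z`
(viewing `A + C` and `B + C` inside `A + B + C`). -/
theorem monoidal_colimit_orbits {A B C : Type} (f : A ⊕ C → B ⊕ C) :
    -- the three legs of the composable cospans, as maps in `Type`
    let g₁ : (A ⊕ C) ⊕ C ⟶ (A ⊕ C : Type) := TypeCat.ofHom (Sum.elim id Sum.inr)          -- `1_A + ∇_C`
    let g₂ : (A ⊕ C) ⊕ C ⟶ ((B ⊕ C) ⊕ C : Type) := TypeCat.ofHom (Sum.map f id)          -- `f + 1_C`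
    let g₃ : (B ⊕ C) ⊕ C ⟶ (B ⊕ C : Type) := TypeCat.ofHom (Sum.elim id Sum.inr)          -- `1_B + ∇_C`
    -- composite by successive pushouts
    let Q := pushout (pushout.inr g₁ g₂) g₃
    -- the quotient of `A + B + C` by the relation generated by `z ~ f z`
    let emb₁ : A ⊕ C → (A ⊕ B) ⊕ C := Sum.map Sum.inl id
    let emb₂ : B ⊕ C → (A ⊕ B) ⊕ C := Sum.map Sum.inr id
    let Q' := Quot (fun z w => ∃ u : A ⊕ C, z = emb₁ u ∧ w = emb₂ (f u))
    Nonempty (Q ≃ Q') := by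
  exact ⟨(pushoutLeftPushoutInrIso _ _ _ ≪≫
    colimit.isoColimitCocone ⟨_, Types.Pushout.isColimitCocone _ _⟩).toEquiv.trans
      (pushoutTraceEquivOrbits f)⟩
end

section
/- For each language-valued transition system (a finite graph with edges labelled by letters of Σ, with chosen initial state i and final state f), the language traced out from i to f (the set of words labelling paths from i to f) equals the hom L(i,f) of the free P(Σ*)-category on the labelled graph; moreover, for single-edge graphs this hom is the singleton of the edge's label, and the construction sends the graph-level operations of disjoint union and glueing of states to union and the Kleene-formula combination of languages. Consequently, every language recognized by a finite automaton lies in the closure of singleton languages (and ∅, {ε}) under union, concatenation, and Kleene star (Kleene's theorem, one direction). -/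
/-- Labelled paths in a transition system: `LabelledPath T p q w` holds when there is a path
of edges from state `p` to state `q` whose labels spell out the word `w`. -/
inductive LabelledPath {Q σ : Type*} (T : Q → σ → Q → Prop) : Q → Q → List σ → Prop
  | nil (q : Q) : LabelledPath T q q []
  | cons {p p' q : Q} {a : σ} {w : List σ} :
      T p a p' → LabelledPath T p' q w → LabelledPath T p q (a :: w)

/-- The language traced out from state `i` to state `f` of a labelled transition
system: all words labelling paths from `i` to `f`. -/
def tracedLanguage {Q σ : Type*} (T : Q → σ → Q → Prop) (i f : Q) : Language σ :=
  { w | LabelledPath T i f w }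

/-! Let `A_S(p, q)` be the language of paths from `p` to `q` all of whose intermediate states lie
in `S`. Only the empty path and single edges avoid every state, so `A_∅(p, q)` is finite and
hence regular. Adding a state `x`, a path either never passes through `x` or splits at its
visits to `x`, so
`A_{S ∪ {x}}(p, q) = A_S(p, q) + A_S(p, x) · A_S(x, x)∗ · A_S(x, q)`.
Induction on the finite set `S` reaches `S = Q`, where `A_Q(i, f)` is the traced language. -/

open Computability

namespace Language

variable {α : Type*}

-- Mathlib's `Language.IsRegular` is the DFA side of Kleene's theorem; this is the other side.
def IsRegExpDefinable (L : Language α) : Prop :=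
  ∃ r : RegularExpression α, r.matches' = L

namespace IsRegExpDefinable

variable {L M : Language α}

lemma zero : (0 : Language α).IsRegExpDefinable := ⟨0, rfl⟩

lemma one : (1 : Language α).IsRegExpDefinable := ⟨1, rfl⟩

lemma add (hL : L.IsRegExpDefinable) (hM : M.IsRegExpDefinable) :
    (L + M).IsRegExpDefinable := by
  obtain ⟨r, rfl⟩ := hL
  obtain ⟨s, rfl⟩ := hM
  exact ⟨r + s, rfl⟩

lemma mul (hL : L.IsRegExpDefinable) (hM : M.IsRegExpDefinable) :
    (L * M).IsRegExpDefinable := by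
  obtain ⟨r, rfl⟩ := hL
  obtain ⟨s, rfl⟩ := hM
  exact ⟨r * s, rfl⟩

lemma kstar (hL : L.IsRegExpDefinable) : L∗.IsRegExpDefinable := by
  obtain ⟨r, rfl⟩ := hL
  exact ⟨r.star, rfl⟩

lemma singleton (w : List α) : IsRegExpDefinable ({w} : Language α) := by
  induction w with
  | nil => exact one
  | cons a w ih =>
    have hcons : ({a :: w} : Language α) = {[a]} * {w} := by
      ext v
      constructor
      · rintro rfl
        exact append_mem_mul (l := {[a]}) rfl rfl
      · rintro ⟨_, rfl, _, rfl, rfl⟩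
        rfl
    rw [hcons]
    exact mul ⟨RegularExpression.char a, rfl⟩ ih

lemma of_finite (hL : (L : Set (List α)).Finite) : L.IsRegExpDefinable := by
  refine hL.induction_on (motive := fun L _ => IsRegExpDefinable L) _ zero ?_
  intro w L _ _ hL
  rw [Set.insert_eq]
  exact add (singleton w) hL

end IsRegExpDefinable

end Language

open Language

-- Only the states entered by `cons` must lie in `S`; the endpoints are unconstrained.
inductive PathThrough {Q σ : Type*} (T : Q → σ → Q → Prop) (S : Set Q) :
    Q → Q → List σ → Prop
  | nil (q : Q) : PathThrough T S q q []
  | single {p q : Q} {a : σ} : T p a q → PathThrough T S p q [a]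
  | cons {p p' q : Q} {a : σ} {w : List σ} :
      T p a p' → p' ∈ S → PathThrough T S p' q w → PathThrough T S p q (a :: w)

def pathThroughLang {Q σ : Type*} (T : Q → σ → Q → Prop) (S : Set Q) (p q : Q) :
    Language σ :=
  {w | PathThrough T S p q w}

section

variable {Q σ : Type*} {T : Q → σ → Q → Prop} {S S' : Set Q} {p q m x : Q}

lemma PathThrough.mono (hS : S ⊆ S') {w : List σ} (h : PathThrough T S p q w) :
    PathThrough T S' p q w := by
  induction h with
  | nil q => exact .nil q
  | single h => exact .single h
  | cons h hm _ ih => exact .cons h (hS hm) ih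

lemma PathThrough.append {u v : List σ} (h₁ : PathThrough T S p m u) (hm : m ∈ S)
    (h₂ : PathThrough T S m q v) : PathThrough T S p q (u ++ v) := by
  induction h₁ with
  | nil => exact h₂
  | single h => exact .cons h hm h₂
  | cons h hmem _ ih => exact .cons h hmem (ih hm h₂)

lemma pathThroughLang_mono (hS : S ⊆ S') :
    pathThroughLang T S p q ≤ pathThroughLang T S' p q :=
  fun _ h => PathThrough.mono hS h

lemma pathThroughLang_mul_le (hm : m ∈ S) :
    pathThroughLang T S p m * pathThroughLang T S m q ≤ pathThroughLang T S p q := by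
  rintro _ ⟨u, hu, v, hv, rfl⟩
  exact PathThrough.append hu hm hv

lemma singleton_le_pathThroughLang {a : σ} (h : T p a q) :
    ({[a]} : Language σ) ≤ pathThroughLang T S p q := by
  rintro _ rfl
  exact .single h

lemma singleton_mul_pathThroughLang_le {a : σ} (h : T p a m) (hm : m ∈ S) :
    {[a]} * pathThroughLang T S m q ≤ pathThroughLang T S p q := by
  rintro _ ⟨_, rfl, w, hw, rfl⟩
  exact .cons h hm hw

lemma pathThroughLang_empty_finite [Finite σ] (p q : Q) :
    (pathThroughLang T ∅ p q : Set (List σ)).Finite := by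
  refine ((Set.finite_range fun a : σ => [a]).insert []).subset ?_
  rintro _ (_ | ⟨h⟩ | ⟨_, hm, _⟩)
  · exact Set.mem_insert _ _
  · exact Set.mem_insert_of_mem _ ⟨_, rfl⟩
  · exact absurd hm (Set.notMem_empty _)

lemma pathThroughLang_mul_kstar_mul_le (hx : x ∈ S) :
    pathThroughLang T S p x * (pathThroughLang T S x x)∗ * pathThroughLang T S x q ≤
      pathThroughLang T S p q :=
  calc _ ≤ pathThroughLang T S p x * pathThroughLang T S x q := by
        gcongr
        exact mul_kstar_le_self (pathThroughLang_mul_le hx)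
    _ ≤ _ := pathThroughLang_mul_le hx

lemma pathThroughLang_insert_le :
    pathThroughLang T (insert x S) p q ≤
      pathThroughLang T S p q +
        pathThroughLang T S p x * (pathThroughLang T S x x)∗ * pathThroughLang T S x q := by
  set A := pathThroughLang T S
  intro w h
  induction h with
  | nil q => exact Or.inl (.nil q)
  | single h => exact Or.inl (.single h)
  | @cons p p' q a tail h hp' _ ih =>
    have ha := append_mem_mul (l := {[a]}) rfl ih
    rcases hp' with rfl | hp'
    · -- the tail lies in `A p' q + A p' p' * (A p' p')∗ * A p' q = (A p' p')∗ * A p' q`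
      have hle : {[a]} * (A p' q + A p' p' * (A p' p')∗ * A p' q) ≤
          A p p' * (A p' p')∗ * A p' q := by
        nth_rw 1 [← one_mul (A p' q)]
        rw [← add_mul, one_add_self_mul_kstar_eq_kstar, ← mul_assoc]
        gcongr
        exact singleton_le_pathThroughLang h
      exact Or.inr (hle ha)
    · have hle : {[a]} * (A p' q + A p' x * (A x x)∗ * A x q) ≤
          A p q + A p x * (A x x)∗ * A x q := by
        rw [mul_add, ← mul_assoc, ← mul_assoc]
        gcongr <;> exact singleton_mul_pathThroughLang_le h hp'
      exact hle ha

lemma pathThroughLang_insert :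
    pathThroughLang T (insert x S) p q =
      pathThroughLang T S p q +
        pathThroughLang T S p x * (pathThroughLang T S x x)∗ * pathThroughLang T S x q := by
  refine le_antisymm pathThroughLang_insert_le (add_le ?_ ?_)
  · exact pathThroughLang_mono (Set.subset_insert x S)
  · calc _ ≤ pathThroughLang T (insert x S) p x * (pathThroughLang T (insert x S) x x)∗ *
          pathThroughLang T (insert x S) x q := by
          gcongr <;> exact pathThroughLang_mono (Set.subset_insert x S)
      _ ≤ _ := pathThroughLang_mul_kstar_mul_le (Set.mem_insert x S)

lemma isRegExpDefinable_pathThroughLang [Finite σ] (hS : S.Finite) (p q : Q) :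
    (pathThroughLang T S p q).IsRegExpDefinable := by
  induction S, hS using Set.Finite.induction_on generalizing p q with
  | empty => exact .of_finite (pathThroughLang_empty_finite p q)
  | @insert x S _ _ ih =>
    rw [pathThroughLang_insert]
    exact (ih p q).add (((ih p x).mul (ih x x).kstar).mul (ih x q))

lemma pathThrough_univ_iff {w : List σ} :
    PathThrough T Set.univ p q w ↔ LabelledPath T p q w := by
  constructor
  · intro h
    induction h with
    | nil q => exact .nil q
    | single h => exact .cons h (.nil _)
    | cons h _ _ ih => exact .cons h ih
  · intro h
    induction h with
    | nil q => exact .nil q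
    | cons h _ ih => exact .cons h (Set.mem_univ _) ih

lemma pathThroughLang_univ (p q : Q) : pathThroughLang T Set.univ p q = tracedLanguage T p q :=
  Set.ext fun _ => pathThrough_univ_iff

end

theorem automaton_language_regular_general {Q σ : Type*} [Finite Q] [Fintype σ]
    (T : Q → σ → Q → Prop) (i f : Q) :
    ∃ r : RegularExpression σ, r.matches' = tracedLanguage T i f := by
  rw [← pathThroughLang_univ]
  exact isRegExpDefinable_pathThroughLang Set.finite_univ i f

/-- Kleene's theorem (one direction): the language traced out from an initial to a
final state of a finite labelled graph (a finite automaton) is regular, i.e. lies in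
the closure of `∅`, `{ε}` and the singletons `{a}` under union, concatenation and
Kleene star — equivalently, it is the language of some regular expression. -/
theorem automaton_language_regular {Q σ : Type*} [Finite Q] [Fintype σ]
    [DecidableEq σ] (T : Q → σ → Q → Prop) (i f : Q) :
    ∃ r : RegularExpression σ, r.matches' = tracedLanguage T i f :=
  automaton_language_regular_general T i f
end
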